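/- arXiv:2601.09955 — 6 statements merged into one kernel-verified Lean document; each statement's English description precedes it below -/
import Mathlib

section
/- Let q be a prime power and n ≥ 1 a divisor of q−1 such that q(q−1)/n is even. Suppose the cyclic group of order n has a difference set (possibly trivial) with parameters (n,k,λ). Then there exists a divisible design graph with parameters (n(q+1), kq, λq, k²(q−1)/n, q+1, n). -/
/-!
Fix homogeneous coordinates on the projective line `P¹(𝔽_q)` and a surjective character
`χ : 𝔽_q^× → ℤ/n`; the parity condition makes `-1` an `n`-th power, so `χ(-1) = 0`. Join `(P, u)`
and `(Q, v)` when `P ≠ Q` and `χ(det(P, Q)) + u + v ∈ D`. Through a third point `Q`, the vertices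
`(P, s)` and `(R, t)` have as many common neighbours as there are differences `x - y = c` with
`x, y ∈ D`, where `c = χ(det(P, Q)) - χ(det(Q, R)) + s - t`. For `P = R` the shift is `s - t` for
each of the `q` points `Q`, giving `kq` or `λq`. For `P ≠ R` the Plücker relation makes
`Q ↦ det(P, Q) / det(Q, R)` a bijection from `P¹ ∖ {P, R}` onto `𝔽_q^×`, so `c` takes every value
`(q - 1) / n` times, giving `k²(q - 1) / n`.
-/

open Classical Finset

section DiffRepr

variable {A : Type*} [AddCommGroup A] [DecidableEq A]

def diffRepr (D : Finset A) (g : A) : ℕ := #{x ∈ D ×ˢ D | x.1 - x.2 = g}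

lemma diffRepr_zero (D : Finset A) : diffRepr D 0 = #D := by
  rw [← D.diag_card, diffRepr]
  congr 1
  ext ⟨x, y⟩
  simp only [mem_filter, mem_product, sub_eq_zero, mem_diag]
  constructor
  · rintro ⟨⟨hx, -⟩, rfl⟩; exact ⟨hx, rfl⟩
  · rintro ⟨hx, rfl⟩; exact ⟨⟨hx, hx⟩, rfl⟩

lemma sum_diffRepr [Fintype A] (D : Finset A) : ∑ g, diffRepr D g = #D ^ 2 := by
  rw [sq, ← card_product, card_eq_sum_card_fiberwise (f := fun x : A × A => x.1 - x.2)
    (t := univ) fun _ _ => mem_univ _]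
  rfl

lemma card_filter_add_mem_and_add_mem [Fintype A] (D : Finset A) (a b : A) :
    #{u | a + u ∈ D ∧ b + u ∈ D} = diffRepr D (a - b) := by
  refine card_nbij' (fun u => (a + u, b + u)) (fun x => x.1 - a) ?_ ?_ ?_ ?_
  · intro u hu
    simp only [coe_filter, mem_univ, true_and, Set.mem_ofPred_eq] at hu
    simp [hu]
  · intro x hx
    simp only [coe_filter, mem_product, Set.mem_ofPred_eq] at hx
    obtain ⟨⟨hx₁, hx₂⟩, hx⟩ := hx
    have : b + (x.1 - a) = x.2 := by rw [sub_eq_sub_iff_sub_eq_sub.mp hx]; abel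
    simp [hx₁, hx₂, this]
  · intro u _
    simp
  · intro x hx
    simp only [coe_filter, mem_product, Set.mem_ofPred_eq] at hx
    ext
    · simp
    · simp only [sub_eq_sub_iff_sub_eq_sub.mp hx.2]; abel

end DiffRepr

lemma card_filter_fst_eq {α β : Type*} [Fintype α] [DecidableEq α] [Fintype β] (a : α) :
    #{v : α × β | v.1 = a} = Fintype.card β := by
  rw [show ({v | v.1 = a} : Finset (α × β)) = {a} ×ˢ univ by ext ⟨x, y⟩; simp [eq_comm],
    card_product, card_singleton, one_mul, card_univ]

lemma MonoidHom.sum_comp_of_surjective {Γ H M : Type*} [Group Γ] [Fintype Γ] [Group H]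
    [Fintype H] [DecidableEq H] [AddCommMonoid M] {χ : Γ →* H} (hχ : Function.Surjective χ)
    (f : H → M) :
    ∑ g, f (χ g) = (Fintype.card Γ / Fintype.card H) • ∑ h, f h := by
  have hfiber : ∀ h, #{g | χ g = h} = Fintype.card Γ / Fintype.card H := by
    intro h
    have hcard := card_eq_sum_card_fiberwise (s := univ) (t := univ) (f := χ)
      fun _ _ => mem_univ _
    simp only [fun h' => MonoidHom.card_fiber_eq_of_mem_range χ (hχ h') (hχ h), sum_const,
      card_univ, smul_eq_mul] at hcard
    rw [hcard, Nat.mul_div_cancel_left _ Fintype.card_pos]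
  rw [sum_comp, image_univ_of_surjective hχ, smul_sum]
  simp only [hfiber]

lemma IsCyclic.exists_monoidHom_zmod_surjective {Γ : Type*} [Group Γ] [hΓ : IsCyclic Γ]
    {n : ℕ} (hn : n ∣ Nat.card Γ) :
    ∃ χ : Γ →* Multiplicative (ZMod n), Function.Surjective χ :=
  ⟨(ZMod.castHom hn (ZMod n)).toAddMonoidHom.toMultiplicative.comp
      (zmodCyclicMulEquiv hΓ).symm.toMonoidHom,
    (ZMod.castHom_surjective hn).comp (zmodCyclicMulEquiv hΓ).symm.surjective⟩

lemma FiniteField.exists_pow_eq_neg_one {F : Type*} [Field F] [Fintype F] {n : ℕ}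
    (hnd : n ∣ Fintype.card F - 1) (heven : Even (Fintype.card F * ((Fintype.card F - 1) / n))) :
    ∃ y : Fˣ, y ^ n = -1 := by
  by_cases hchar : ringChar F = 2
  · exact ⟨1, Units.ext <| by simp [neg_one_eq_one_iff.mpr hchar]⟩
  -- in odd characteristic `q - 1 = 2nc`, and `-1` is the unique element of order 2
  have hodd := FiniteField.odd_card_of_char_ne_two hchar
  obtain ⟨c, hc⟩ := (Nat.even_mul.mp heven).resolve_left (by rw [Nat.even_iff]; omega)
  have hq : Fintype.card F - 1 = 2 * (n * c) := by
    rw [← Nat.mul_div_cancel' hnd, hc]; ring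
  obtain ⟨g, hg⟩ := IsCyclic.exists_generator (α := Fˣ)
  have hord : orderOf g = Fintype.card F - 1 := by
    rw [orderOf_eq_card_of_forall_mem_zpowers hg, Nat.card_eq_fintype_card, Fintype.card_units]
  have hpos : 0 < n * c := by have := Fintype.one_lt_card (α := F); omega
  have hsq : (((g ^ c) ^ n : Fˣ) : F) ^ 2 = 1 := by
    rw [← Units.val_pow_eq_pow_val, ← pow_mul, ← pow_mul,
      show c * (n * 2) = orderOf g by rw [hord, hq]; ring, pow_orderOf_eq_one, Units.val_one]
  have hne : (g ^ c) ^ n ≠ 1 := by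
    rw [← pow_mul]
    exact pow_ne_one_of_lt_orderOf (by rw [mul_comm]; omega)
      (by rw [hord, hq, mul_comm c n]; omega)
  refine ⟨g ^ c, Units.ext ?_⟩
  rw [Units.val_neg, Units.val_one]
  exact (sq_eq_one_iff.mp hsq).resolve_left fun h => hne (Units.ext (by simpa using h))

section CharLog

variable {F A : Type*} [Field F] [AddCommGroup A] (χ : Fˣ →* Multiplicative A)

noncomputable def charLog (x : F) : A := if hx : x = 0 then 0 else (χ (Units.mk0 x hx)).toAdd

variable {χ}

lemma charLog_of_ne_zero {x : F} (hx : x ≠ 0) : charLog χ x = (χ (Units.mk0 x hx)).toAdd :=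
  dif_neg hx

lemma charLog_neg (hχ : χ (-1) = 1) (x : F) : charLog χ (-x) = charLog χ x := by
  rcases eq_or_ne x 0 with rfl | hx
  · rw [neg_zero]
  rw [charLog_of_ne_zero hx, charLog_of_ne_zero (neg_ne_zero.mpr hx),
    show Units.mk0 (-x) (neg_ne_zero.mpr hx) = -1 * Units.mk0 x hx from Units.ext (by simp),
    map_mul, hχ, one_mul]

lemma charLog_div {x y : F} (hx : x ≠ 0) (hy : y ≠ 0) :
    charLog χ (x / y) = charLog χ x - charLog χ y := by
  rw [charLog_of_ne_zero (div_ne_zero hx hy), charLog_of_ne_zero hx, charLog_of_ne_zero hy,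
    show Units.mk0 (x / y) (div_ne_zero hx hy) = Units.mk0 x hx / Units.mk0 y hy from
      Units.ext (by simp), map_div, toAdd_div]

lemma sum_charLog [Fintype F] [DecidableEq F] [Fintype A] [DecidableEq A] {M : Type*}
    [AddCommMonoid M] (hχ : Function.Surjective χ) (f : A → M) :
    ∑ x ∈ univ.erase 0, f (charLog χ x) = (Fintype.card Fˣ / Fintype.card A) • ∑ a, f a := by
  rw [sum_subtype (univ.erase 0) (p := (· ≠ 0)) (by simp),
    ← (unitsEquivNeZero (G₀ := F)).sum_comp]
  have hunit (u : Fˣ) : charLog χ (u : F) = (χ u).toAdd := by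
    rw [charLog_of_ne_zero u.ne_zero, Units.mk0_val]
  simp only [unitsEquivNeZero_apply_coe, hunit]
  rw [← Multiplicative.toAdd.sum_comp f, ← Fintype.card_multiplicative A]
  convert MonoidHom.sum_comp_of_surjective hχ (f ∘ Multiplicative.toAdd) using 3 <;> rfl

end CharLog

namespace ProjLine

variable {F : Type*} [Field F]

def det (v w : F × F) : F := v.1 * w.2 - v.2 * w.1

/-- Homogeneous coordinates on the projective line `Option F`, with `none` at infinity. -/
def pt : Option F → F × F
  | none => (1, 0)
  | some a => (a, 1)

lemma det_swap (v w : F × F) : det w v = -det v w := by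
  simp only [det]; ring

lemma det_pt_ne_zero {i j : Option F} (h : i ≠ j) : det (pt i) (pt j) ≠ 0 := by
  match i, j with
  | none, none => exact absurd rfl h
  | none, some _ => simp [det, pt]
  | some _, none => simp [det, pt]
  | some a, some b =>
    simp only [det, pt, mul_one, one_mul]
    exact sub_ne_zero.mpr fun hab => h (by rw [hab])

lemma injOn_det_div {i j : Option F} (hij : i ≠ j) :
    Set.InjOn (fun m => det (pt i) (pt m) / det (pt m) (pt j)) {i, j}ᶜ := by
  intro m hm m' hm' heq
  simp only [Set.mem_compl_iff, Set.mem_insert_iff, Set.mem_singleton_iff, not_or] at hm hm'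
  rw [div_eq_div_iff (det_pt_ne_zero hm.2) (det_pt_ne_zero hm'.2)] at heq
  by_contra hne
  -- Plücker relation among the four points `i, m, m', j`
  have hpl : det (pt i) (pt j) * det (pt m) (pt m') = 0 := by
    simp only [det] at heq ⊢; linear_combination -heq
  exact mul_ne_zero (det_pt_ne_zero hij) (det_pt_ne_zero hne) hpl

lemma sum_det_div [Fintype F] [DecidableEq F] {M : Type*} [AddCommMonoid M] {i j : Option F}
    (hij : i ≠ j) (f : F → M) :
    ∑ m ∈ univ \ {i, j}, f (det (pt i) (pt m) / det (pt m) (pt j)) = ∑ x ∈ univ.erase 0, f x := by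
  have hinj := (injOn_det_div hij).mono (s₁ := ↑(univ \ {i, j})) (by simp)
  rw [← sum_image hinj]
  congr 1
  refine eq_of_subset_of_card_le ?_ ?_
  · intro x hx
    obtain ⟨m, hm, rfl⟩ := mem_image.mp hx
    simp only [mem_sdiff, mem_univ, mem_insert, mem_singleton, not_or, true_and] at hm
    exact mem_erase.mpr ⟨div_ne_zero (det_pt_ne_zero (Ne.symm hm.1)) (det_pt_ne_zero hm.2),
      mem_univ _⟩
  · rw [card_image_of_injOn hinj, card_erase_of_mem (mem_univ _), card_univ,
      card_sdiff_of_subset (subset_univ _), card_univ, Fintype.card_option,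
      card_pair hij]
    simp

end ProjLine

section DivisibleDesignGraph

variable {V C : Type*} [Fintype V] [DecidableEq V] [DecidableEq C]

def IsDivisibleDesignGraph (G : SimpleGraph V) (cls : V → C) (k l₁ l₂ : ℕ) : Prop :=
  (Matrix.of fun a b => if G.Adj a b then (1 : ℤ) else 0) *
      (Matrix.of fun a b => if G.Adj a b then (1 : ℤ) else 0)
    = (k : ℤ) • (1 : Matrix V V ℤ)
      + (l₁ : ℤ) • ((Matrix.of fun a b => if cls a = cls b then (1 : ℤ) else 0) - 1)
      + (l₂ : ℤ) • ((Matrix.of fun _ _ => (1 : ℤ))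
        - Matrix.of fun a b => if cls a = cls b then (1 : ℤ) else 0)

lemma isDivisibleDesignGraph_iff {G : SimpleGraph V} {cls : V → C} {k l₁ l₂ : ℕ} :
    IsDivisibleDesignGraph G cls k l₁ l₂ ↔ ∀ a b,
      #{v | G.Adj a v ∧ G.Adj v b} = if a = b then k else if cls a = cls b then l₁ else l₂ := by
  rw [IsDivisibleDesignGraph, ← Matrix.ext_iff]
  refine forall₂_congr fun a b => ?_
  rw [← Nat.cast_inj (R := ℤ), card_filter, Matrix.mul_apply]
  simp only [Matrix.of_apply, ite_zero_mul_ite_zero, mul_one, Matrix.add_apply,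
    Matrix.smul_apply, Matrix.sub_apply, Matrix.one_apply, smul_eq_mul]
  push_cast
  split_ifs <;> simp_all

lemma IsDivisibleDesignGraph.comap {W C' : Type*} [Fintype W] [DecidableEq W] [DecidableEq C']
    {G : SimpleGraph V} {cls : V → C} {k l₁ l₂ : ℕ} (h : IsDivisibleDesignGraph G cls k l₁ l₂)
    (e : W ≃ V) {f : C → C'} (hf : Function.Injective f) :
    IsDivisibleDesignGraph (G.comap e) (f ∘ cls ∘ e) k l₁ l₂ := by
  rw [isDivisibleDesignGraph_iff] at h ⊢
  intro a b
  rw [card_equiv e (t := {v | G.Adj (e a) v ∧ G.Adj v (e b)}) (by simp), h]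
  simp [hf.eq_iff]

end DivisibleDesignGraph

section ProjLineGraph

open ProjLine

variable {F A : Type*} [Field F] [AddCommGroup A]

def projLineGraph (D : Finset A) (χ : Fˣ →* Multiplicative A) (hχ : χ (-1) = 1) :
    SimpleGraph (Option F × A) where
  Adj a b := a.1 ≠ b.1 ∧ charLog χ (det (pt a.1) (pt b.1)) + a.2 + b.2 ∈ D
  symm := ⟨fun _ _ h => ⟨h.1.symm, by rw [det_swap, charLog_neg hχ, add_right_comm]; exact h.2⟩⟩
  loopless := ⟨fun _ h => h.1 rfl⟩

variable {D : Finset A} {χ : Fˣ →* Multiplicative A} {hχ : χ (-1) = 1}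

@[simp]
lemma projLineGraph_adj {a b : Option F × A} :
    (projLineGraph D χ hχ).Adj a b ↔
      a.1 ≠ b.1 ∧ charLog χ (det (pt a.1) (pt b.1)) + a.2 + b.2 ∈ D :=
  Iff.rfl

variable [Fintype F] [DecidableEq F] [Fintype A] [DecidableEq A]

lemma card_common_projLineGraph (a b : Option F × A) :
    #{v | (projLineGraph D χ hχ).Adj a v ∧ (projLineGraph D χ hχ).Adj v b}
      = ∑ m ∈ univ \ {a.1, b.1}, diffRepr D
          ((charLog χ (det (pt a.1) (pt m)) + a.2) - (charLog χ (det (pt m) (pt b.1)) + b.2)) := by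
  obtain ⟨i, s⟩ := a
  obtain ⟨j, t⟩ := b
  rw [card_filter, Fintype.sum_prod_type, ← sum_subset (subset_univ (univ \ {i, j}))]
  · refine sum_congr rfl fun m hm => ?_
    simp only [mem_sdiff, mem_univ, mem_insert, mem_singleton, not_or, true_and] at hm
    rw [← card_filter_add_mem_and_add_mem, card_filter]
    refine sum_congr rfl fun u _ => if_congr ?_ rfl rfl
    simp only [projLineGraph_adj, ne_eq, Ne.symm hm.1, hm.2, not_false_eq_true, true_and]
    rw [add_right_comm _ u t]
  · intro m _ hm
    simp only [mem_sdiff, mem_univ, mem_insert, mem_singleton, true_and, not_not] at hm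
    refine sum_eq_zero fun u _ => if_neg ?_
    rintro ⟨h₁, h₂⟩
    rcases hm with rfl | rfl
    exacts [(projLineGraph_adj.mp h₁).1 rfl, (projLineGraph_adj.mp h₂).1 rfl]

lemma card_common_projLineGraph_of_fst_eq {a b : Option F × A} (hab : a.1 = b.1) :
    #{v | (projLineGraph D χ hχ).Adj a v ∧ (projLineGraph D χ hχ).Adj v b}
      = Fintype.card F * diffRepr D (a.2 - b.2) := by
  have hterm (m : Option F) : (charLog χ (det (pt b.1) (pt m)) + a.2)
      - (charLog χ (det (pt m) (pt b.1)) + b.2) = a.2 - b.2 := by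
    rw [det_swap (pt m), charLog_neg hχ, add_sub_add_left_eq_sub]
  rw [card_common_projLineGraph, hab, insert_eq_self.mpr (mem_singleton_self _)]
  simp only [hterm, sum_const, smul_eq_mul]
  rw [card_sdiff_of_subset (subset_univ _), card_univ, Fintype.card_option, card_singleton,
    Nat.add_sub_cancel]

lemma card_common_projLineGraph_of_fst_ne (hsurj : Function.Surjective χ) {a b : Option F × A}
    (hab : a.1 ≠ b.1) :
    #{v | (projLineGraph D χ hχ).Adj a v ∧ (projLineGraph D χ hχ).Adj v b}
      = Fintype.card Fˣ / Fintype.card A * #D ^ 2 := by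
  have hshift : ∀ m ∈ univ \ {a.1, b.1},
      (charLog χ (det (pt a.1) (pt m)) + a.2) - (charLog χ (det (pt m) (pt b.1)) + b.2)
        = charLog χ (det (pt a.1) (pt m) / det (pt m) (pt b.1)) + (a.2 - b.2) := by
    intro m hm
    simp only [mem_sdiff, mem_univ, mem_insert, mem_singleton, not_or, true_and] at hm
    rw [charLog_div (det_pt_ne_zero (Ne.symm hm.1)) (det_pt_ne_zero hm.2)]
    abel
  rw [card_common_projLineGraph, sum_congr rfl fun m hm => congrArg (diffRepr D) (hshift m hm),
    sum_det_div hab (fun x => diffRepr D (charLog χ x + (a.2 - b.2))),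
    sum_charLog hsurj (fun c => diffRepr D (c + (a.2 - b.2))),
    ← sum_diffRepr D, smul_eq_mul]
  congr 1
  exact Fintype.sum_equiv (Equiv.addRight _) _ _ fun _ => rfl

theorem isDivisibleDesignGraph_projLineGraph (hsurj : Function.Surjective χ) {l : ℕ}
    (hDS : ∀ g ≠ 0, diffRepr D g = l) :
    IsDivisibleDesignGraph (projLineGraph D χ hχ) Prod.fst (#D * Fintype.card F)
      (l * Fintype.card F) (#D ^ 2 * (Fintype.card Fˣ / Fintype.card A)) := by
  rw [isDivisibleDesignGraph_iff]
  intro a b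
  by_cases hab : a.1 = b.1
  · rw [card_common_projLineGraph_of_fst_eq hab, if_pos hab]
    split_ifs with h
    · rw [h, sub_self, diffRepr_zero, mul_comm]
    · rw [hDS _ (sub_ne_zero.mpr fun h₂ => h (Prod.ext hab h₂)), mul_comm]
  · rw [card_common_projLineGraph_of_fst_ne hsurj hab,
      if_neg fun h => hab (congrArg Prod.fst h), if_neg hab, mul_comm]

end ProjLineGraph

/-- let `q` be a prime power and `n ≥ 1` a divisor of `q−1` with
`q(q−1)/n` even, and suppose the cyclic group of order `n` has a difference set with
parameters `(n, k, λ)`. Then there is a divisible design graph with parameters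
`(n(q+1), kq, λq, k²(q−1)/n, q+1, n)`: a graph on `n(q+1)` vertices, partitioned into
`q+1` classes of size `n`, whose adjacency matrix `A` satisfies
`A² = kq·I + λq·(P − I) + (k²(q−1)/n)·(J − P)`, where `P` is the same-class indicator
matrix. -/
theorem stmt_1 (q n k l : ℕ)
    (hq : ∃ r e : ℕ, r.Prime ∧ 0 < e ∧ q = r ^ e)
    (hn : 1 ≤ n) (hnd : n ∣ q - 1) (heven : Even (q * ((q - 1) / n)))
    (D : Finset (ZMod n)) (hD : D.card = k)
    (hDS : ∀ g : ZMod n, g ≠ 0 →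
      ((D ×ˢ D).filter (fun x : ZMod n × ZMod n => x.1 - x.2 = g)).card = l) :
    ∃ (G : SimpleGraph (Fin (n * (q + 1)))) (cls : Fin (n * (q + 1)) → Fin (q + 1)),
      (∀ j : Fin (q + 1), (Finset.univ.filter fun v => cls v = j).card = n) ∧
      (Matrix.of fun a b => if G.Adj a b then (1 : ℤ) else 0) *
          (Matrix.of fun a b => if G.Adj a b then (1 : ℤ) else 0)
        = ((k * q : ℕ) : ℤ) • (1 : Matrix (Fin (n * (q + 1))) (Fin (n * (q + 1))) ℤ)
          + ((l * q : ℕ) : ℤ) •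
              ((Matrix.of fun a b => if cls a = cls b then (1 : ℤ) else 0) - 1)
          + ((k ^ 2 * ((q - 1) / n) : ℕ) : ℤ) •
              ((Matrix.of fun _ _ => (1 : ℤ))
                - Matrix.of fun a b => if cls a = cls b then (1 : ℤ) else 0) := by
  have : NeZero n := ⟨by omega⟩
  obtain ⟨r, e, hr, he, hqre⟩ := hq
  have : Fact r.Prime := ⟨hr⟩
  let _ : Fintype (GaloisField r e) := Fintype.ofFinite _
  have hF : Fintype.card (GaloisField r e) = q := by
    rw [← Nat.card_eq_fintype_card, GaloisField.card r e he.ne', hqre]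
  obtain ⟨χ, hχ⟩ := IsCyclic.exists_monoidHom_zmod_surjective (Γ := (GaloisField r e)ˣ)
    (n := n) (by rwa [Nat.card_eq_fintype_card, Fintype.card_units, hF])
  obtain ⟨y, hy⟩ :=
    FiniteField.exists_pow_eq_neg_one (F := GaloisField r e) (hF ▸ hnd) (hF ▸ heven)
  have hχneg : χ (-1) = 1 := by
    simpa [← hy] using pow_card_eq_one' (G := Multiplicative (ZMod n)) (x := χ y)
  have hDDG := isDivisibleDesignGraph_projLineGraph (D := D) (hχ := hχneg) hχ hDS
  rw [hD, hF, Fintype.card_units, hF, ZMod.card] at hDDG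
  let e₁ : Fin (n * (q + 1)) ≃ Option (GaloisField r e) × ZMod n :=
    (Fintype.equivFinOfCardEq <| by
      rw [Fintype.card_prod, Fintype.card_option, hF, ZMod.card, mul_comm]).symm
  let e₂ : Option (GaloisField r e) ≃ Fin (q + 1) :=
    Fintype.equivFinOfCardEq (by rw [Fintype.card_option, hF])
  refine ⟨(projLineGraph D χ hχneg).comap e₁, e₂ ∘ Prod.fst ∘ e₁, fun j => ?_,
    hDDG.comap e₁ e₂.injective⟩
  rw [card_equiv e₁ (t := {v | v.1 = e₂.symm j}) (by simp [Equiv.eq_symm_apply]),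
    card_filter_fst_eq, ZMod.card]
end

section
/- For all h,g ∈ C: B_hB_g = q·A_{h⁻¹g} + m·(J − A_C). Moreover every row and column sum of A_g equals 1 (so r_g has valency 1) and every row and column sum of B_g equals q (so s_g has valency q). -/
open Classical Matrix

namespace Tatra

variable (F : Type) [Field F] [Fintype F] (K : Subgroup Fˣ)

/-- The equivalence relation on nonzero vectors of `F²` identifying `v` with `x • v` for `x ∈ K`. -/
def ksetoid : Setoid {v : Fin 2 → F // v ≠ 0} where
  r u v := ∃ x : Fˣ, x ∈ K ∧ ((x : F) • u.1 = v.1)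
  iseqv := by
    refine ⟨fun u => ⟨1, K.one_mem, by simp⟩, ?_, ?_⟩
    · rintro u v ⟨x, hx, h⟩
      refine ⟨x⁻¹, K.inv_mem hx, ?_⟩
      rw [← h, smul_smul, Units.val_inv_eq_inv_val, inv_mul_cancel₀ x.ne_zero, one_smul]
    · rintro u v w ⟨x, hx, h1⟩ ⟨y, hy, h2⟩
      refine ⟨y * x, K.mul_mem hy hx, ?_⟩
      rw [Units.val_mul, ← smul_smul, h1, h2]

/-- The point set `Ω` of the Tatra scheme. -/
abbrev Om := Quotient (ksetoid F K)

/-- The cyclic group `C = Fˣ/K`. -/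
abbrev CC := Fˣ ⧸ K

noncomputable instance : Fintype (Om F K) := Fintype.ofFinite _

noncomputable instance : Fintype (CC F K) := @Fintype.ofFinite _ (Quotient.finite _)

/-- The relation `r_g = {(α, β) : β = gα}` on `Ω`. -/
def rrel (g : CC F K) : Set (Om F K × Om F K) :=
  {p | ∃ (u v : {w : Fin 2 → F // w ≠ 0}) (y : Fˣ),
    Quotient.mk (ksetoid F K) u = p.1 ∧ Quotient.mk (ksetoid F K) v = p.2 ∧
    (QuotientGroup.mk y : CC F K) = g ∧ ((y : F) • u.1 = v.1)}

/-- `det(u,v) = u₁v₂ - u₂v₁`. -/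
def dt (u v : {w : Fin 2 → F // w ≠ 0}) : F := u.1 0 * v.1 1 - u.1 1 * v.1 0

/-- The relation `s_g = {(Ku, Kv) : det(u,v) ∈ g}` on `Ω`. -/
def srel (g : CC F K) : Set (Om F K × Om F K) :=
  {p | ∃ (u v : {w : Fin 2 → F // w ≠ 0}) (y : Fˣ),
    Quotient.mk (ksetoid F K) u = p.1 ∧ Quotient.mk (ksetoid F K) v = p.2 ∧
    (QuotientGroup.mk y : CC F K) = g ∧ (y : F) = dt F u v}

/-- Adjacency matrix `A_g` of `r_g`. -/
noncomputable def Amat (g : CC F K) : Matrix (Om F K) (Om F K) ℤ :=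
  Matrix.of fun α β => if (α, β) ∈ rrel F K g then 1 else 0

/-- Adjacency matrix `B_g` of `s_g`. -/
noncomputable def Bmat (g : CC F K) : Matrix (Om F K) (Om F K) ℤ :=
  Matrix.of fun α β => if (α, β) ∈ srel F K g then 1 else 0

/-- The all-ones matrix `J`. -/
noncomputable def Jmat : Matrix (Om F K) (Om F K) ℤ := Matrix.of fun _ _ => 1

/-- `A_C = Σ_{g ∈ C} A_g`. -/
noncomputable def AC : Matrix (Om F K) (Om F K) ℤ := ∑ g : CC F K, Amat F K g

/-- Sum `A_X = Σ_{g ∈ X} A_g` for `X ⊆ C`. -/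
noncomputable def AmatX (X : Set (CC F K)) : Matrix (Om F K) (Om F K) ℤ :=
  ∑ g ∈ (Set.toFinite X).toFinset, Amat F K g

/-- Sum `B_Y = Σ_{g ∈ Y} B_g` for `Y ⊆ C`. -/
noncomputable def BmatX (Y : Set (CC F K)) : Matrix (Om F K) (Om F K) ℤ :=
  ∑ g ∈ (Set.toFinite Y).toFinset, Bmat F K g

/-- `r_X = ∪_{g ∈ X} r_g`. -/
def rrelX (X : Set (CC F K)) : Set (Om F K × Om F K) := ⋃ g ∈ X, rrel F K g

/-- `s_Y = ∪_{g ∈ Y} s_g`. -/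
def srelX (Y : Set (CC F K)) : Set (Om F K × Om F K) := ⋃ g ∈ Y, srel F K g

/-- The line `Cα` through a point `α ∈ Ω`. -/
def line (α : Om F K) : Set (Om F K) := {β | ∃ g : CC F K, (α, β) ∈ rrel F K g}

/-- The image `t^f` of a binary relation `t` under a permutation `f` of `Ω`. -/
def relImage (f : Equiv.Perm (Om F K)) (t : Set (Om F K × Om F K)) : Set (Om F K × Om F K) :=
  (fun p => (f p.1, f p.2)) '' t

/-- `f` is the permutation `f_{T,σ} : Kv ↦ K(T·v^σ)` of `Ω`. -/
def Implements (T : Matrix (Fin 2) (Fin 2) F) (σ : F ≃+* F) (f : Equiv.Perm (Om F K)) : Prop :=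
  ∀ u v : {w : Fin 2 → F // w ≠ 0}, T.mulVec (fun i => σ (u.1 i)) = v.1 →
    f (Quotient.mk (ksetoid F K) u) = Quotient.mk (ksetoid F K) v

end Tatra

/-!
Since `K` acts freely on nonzero vectors, every count of points of `Ω` is a count of vectors
divided by `m = |K|`. The entry `(B_h B_g)(Ku, Kv)` counts the `w` with `det(u,w) ∈ h` and
`det(w,v) ∈ g`. If `u, v` are independent, `w ↦ (det(u,w), det(w,v))` is a bijection
`F² → F²` (Cramer's rule), so there are `m²` such `w`. If `v = t u`, then
`det(w,v) = -t det(u,w)`; because `-1 ∈ K` (as `q m` is even) both conditions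
hold together only when `h⁻¹g = Kt`, and then there are `q m` solutions.
-/

namespace Tatra

section Determinant

variable {R : Type*} [CommRing R]

def det2 (u v : Fin 2 → R) : R := u 0 * v 1 - u 1 * v 0

lemma det2_self (u : Fin 2 → R) : det2 u u = 0 := by
  simp only [det2]; ring

lemma det2_swap (u v : Fin 2 → R) : det2 v u = -det2 u v := by
  simp only [det2]; ring

lemma det2_smul_left (a : R) (u v : Fin 2 → R) : det2 (a • u) v = a * det2 u v := by
  simp only [det2, Pi.smul_apply, smul_eq_mul]; ring

lemma det2_smul_right (a : R) (u v : Fin 2 → R) : det2 u (a • v) = a * det2 u v := by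
  simp only [det2, Pi.smul_apply, smul_eq_mul]; ring

lemma det2_add_left (u v w : Fin 2 → R) : det2 (u + v) w = det2 u w + det2 v w := by
  simp only [det2, Pi.add_apply]; ring

lemma det2_add_right (u v w : Fin 2 → R) : det2 u (v + w) = det2 u v + det2 u w := by
  simp only [det2, Pi.add_apply]; ring

lemma det2_smul_add_det2_smul (u v w : Fin 2 → R) :
    det2 w v • u + det2 u w • v = det2 u v • w := by
  funext i
  fin_cases i <;>
    (simp only [det2, Fin.zero_eta, Fin.mk_one, Pi.add_apply, Pi.smul_apply, smul_eq_mul]; ring)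

end Determinant

section DeterminantField

variable {F : Type*} [Field F]

lemma exists_det2_ne_zero {u : Fin 2 → F} (hu : u ≠ 0) : ∃ v, det2 u v ≠ 0 := by
  by_contra! h
  have h0 := h ![0, 1]
  have h1 := h ![1, 0]
  simp only [det2, Matrix.cons_val_zero, Matrix.cons_val_one] at h0 h1
  exact hu (funext fun i => by fin_cases i <;> simp_all)

lemma exists_smul_eq_of_det2_eq_zero {u v : Fin 2 → F} (hu : u ≠ 0) (h : det2 u v = 0) :
    ∃ t : F, t • u = v := by
  obtain ⟨w, hw⟩ := exists_det2_ne_zero hu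
  have hcramer := det2_smul_add_det2_smul u w v
  rw [h, zero_smul, add_zero] at hcramer
  refine ⟨(det2 u w)⁻¹ * det2 v w, ?_⟩
  rw [mul_smul, hcramer, smul_smul, inv_mul_cancel₀ hw, one_smul]

/-- Cramer's rule. -/
def det2Equiv {u v : Fin 2 → F} (huv : det2 u v ≠ 0) : (Fin 2 → F) ≃ F × F where
  toFun w := (det2 u w, det2 w v)
  invFun p := (det2 u v)⁻¹ • (p.2 • u + p.1 • v)
  left_inv w := by
    simp only [det2_smul_add_det2_smul, smul_smul, inv_mul_cancel₀ huv, one_smul]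
  right_inv p := by
    ext <;> simp only [det2_smul_left, det2_smul_right, det2_add_left, det2_add_right, det2_self,
      mul_zero, add_zero, zero_add] <;> field_simp

end DeterminantField

section Coset

variable {M : Type*} [CommMonoid M] {K : Subgroup Mˣ} {g g' : Mˣ ⧸ K} {c : M}

def cosetSet (g : Mˣ ⧸ K) : Set M := Units.val '' (QuotientGroup.mk ⁻¹' {g})

lemma card_cosetSet (g : Mˣ ⧸ K) : Nat.card (cosetSet g) = Nat.card K := by
  rw [cosetSet, Nat.card_image_of_injective Units.val_injective, QuotientGroup.card_preimage_mk]
  simp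

lemma eq_of_mem_cosetSet (hg : c ∈ cosetSet g) (hg' : c ∈ cosetSet g') : g = g' := by
  obtain ⟨y, rfl, rfl⟩ := hg
  obtain ⟨y', rfl, hy⟩ := hg'
  rw [Units.val_injective hy]

lemma mem_cosetSet_and_mem_cosetSet_iff :
    c ∈ cosetSet g ∧ c ∈ cosetSet g' ↔ g = g' ∧ c ∈ cosetSet g :=
  ⟨fun hc => ⟨eq_of_mem_cosetSet hc.1 hc.2, hc.1⟩, fun ⟨hg, hc⟩ => ⟨hc, hg ▸ hc⟩⟩

lemma units_mul_mem_cosetSet_iff (y : Mˣ) :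
    (y : M) * c ∈ cosetSet g ↔ c ∈ cosetSet ((y : Mˣ ⧸ K)⁻¹ * g) := by
  constructor
  · rintro ⟨z, hz, hzc⟩
    refine ⟨y⁻¹ * z, ?_, by simp [hzc]⟩
    rw [Set.mem_preimage, Set.mem_singleton_iff] at hz ⊢
    rw [QuotientGroup.mk_mul, QuotientGroup.mk_inv, hz]
  · rintro ⟨z, hz, rfl⟩
    refine ⟨y * z, ?_, by simp⟩
    rw [Set.mem_preimage, Set.mem_singleton_iff] at hz ⊢
    rw [QuotientGroup.mk_mul, hz, mul_inv_cancel_left]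

lemma mul_mem_cosetSet_of_mem {x : Mˣ} (hx : x ∈ K) (hc : c ∈ cosetSet g) :
    (x : M) * c ∈ cosetSet g := by
  rwa [units_mul_mem_cosetSet_iff, (QuotientGroup.eq_one_iff x).2 hx, inv_one, one_mul]

end Coset

section CosetRing

variable {R : Type*} [CommRing R] {K : Subgroup Rˣ} {g : Rˣ ⧸ K} {c : R}

lemma zero_notMem_cosetSet [Nontrivial R] : (0 : R) ∉ cosetSet g := by
  rintro ⟨y, -, hy⟩
  exact y.ne_zero hy

lemma neg_mem_cosetSet_iff (hK : (-1 : Rˣ) ∈ K) : -c ∈ cosetSet g ↔ c ∈ cosetSet g := by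
  rw [← neg_one_mul, ← Units.coe_neg_one, units_mul_mem_cosetSet_iff,
    (QuotientGroup.eq_one_iff _).2 hK, inv_one, one_mul]

end CosetRing

lemma neg_one_mem_of_even_card_mul {F : Type*} [Field F] [Fintype F] {K : Subgroup Fˣ}
    (h : Even (Fintype.card F * Nat.card K)) : (-1 : Fˣ) ∈ K := by
  by_cases hF : ringChar F = 2
  · rw [show (-1 : Fˣ) = 1 from Units.ext (by simpa using neg_one_eq_one_iff.2 hF)]
    exact K.one_mem
  · have hK : Even (Nat.card K) := (Nat.even_mul.1 h).resolve_left
      (by rw [Nat.even_iff]; exact Nat.mod_two_ne_zero.2 (FiniteField.odd_card_of_char_ne_two hF))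
    obtain ⟨x, hx⟩ := exists_prime_orderOf_dvd_card' (G := K) 2 hK.two_dvd
    have hx' : ((x : Fˣ) : F) = -1 :=
      (CharP.orderOf_eq_two_iff (ringChar F) hF).1 (by rwa [orderOf_units, Subgroup.orderOf_coe])
    rw [show (-1 : Fˣ) = x from Units.ext (by simp [hx'])]
    exact x.2

lemma card_eq_card_sub_one_div_index {F : Type*} [Field F] [Fintype F]
    (K : Subgroup Fˣ) : Nat.card K = (Fintype.card F - 1) / K.index := by
  rw [← Fintype.card_units, ← Nat.card_eq_fintype_card, ← K.card_mul_index,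
    Nat.mul_div_cancel _ (Nat.pos_of_ne_zero K.index_ne_zero_of_finite)]

section Counting

variable {F : Type*} [Field F] {K : Subgroup Fˣ}

lemma card_det2_mem_cosetSet {u : Fin 2 → F} (hu : u ≠ 0) (g : Fˣ ⧸ K) :
    Nat.card {w // det2 u w ∈ cosetSet g} = Nat.card K * Nat.card F := by
  obtain ⟨v, hv⟩ := exists_det2_ne_zero hu
  rw [Nat.card_congr ((det2Equiv hv).subtypeEquiv (p := fun w => det2 u w ∈ cosetSet g)
      (q := fun p => p.1 ∈ cosetSet g) fun _ => Iff.rfl),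
    Nat.card_congr Equiv.prodSubtypeFstEquivSubtypeProd, Nat.card_prod, card_cosetSet]

lemma card_det2_mem_cosetSet_and {u v : Fin 2 → F} (huv : det2 u v ≠ 0) (h g : Fˣ ⧸ K) :
    Nat.card {w // det2 u w ∈ cosetSet h ∧ det2 w v ∈ cosetSet g} = Nat.card K * Nat.card K := by
  rw [Nat.card_congr ((det2Equiv huv).subtypeEquiv
      (p := fun w => det2 u w ∈ cosetSet h ∧ det2 w v ∈ cosetSet g)
      (q := fun p => p.1 ∈ cosetSet h ∧ p.2 ∈ cosetSet g) fun _ => Iff.rfl),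
    Nat.card_congr Equiv.subtypeProdEquivProd, Nat.card_prod, card_cosetSet, card_cosetSet]

end Counting

section Points

variable {F : Type} [Field F] {K : Subgroup Fˣ}

local notation "⟦" u "⟧ₖ" => Quotient.mk (ksetoid F K) u

lemma card_fiber (β : Om F K) : Nat.card {w // ⟦w⟧ₖ = β} = Nat.card K := by
  induction β using Quotient.inductionOn with
  | h u =>
    symm
    refine Nat.card_congr (Equiv.ofBijective (fun x : K =>
      ⟨⟨((x : Fˣ) : F) • u.1, smul_ne_zero x.1.ne_zero u.2⟩,
        (Quotient.sound (s := ksetoid F K) ⟨x, x.2, rfl⟩).symm⟩)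
      ⟨fun x x' hxx' => ?_, fun w => ?_⟩)
    · exact Subtype.ext (Units.ext (smul_left_injective F u.2 (congrArg (fun w => w.1.1) hxx')))
    · obtain ⟨x, hx, hxw⟩ := Quotient.exact w.2.symm
      exact ⟨⟨x, hx⟩, Subtype.ext (Subtype.ext hxw)⟩

lemma mem_srel_iff {u v : {w : Fin 2 → F // w ≠ 0}} {g : CC F K} :
    (⟦u⟧ₖ, ⟦v⟧ₖ) ∈ srel F K g ↔ det2 u.1 v.1 ∈ cosetSet g := by
  refine ⟨fun ⟨u', v', y, hu, hv, hy, hyd⟩ => ?_, fun ⟨y, hy, hyd⟩ => ⟨u, v, y, rfl, rfl, hy, hyd⟩⟩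
  obtain ⟨x, hx, hxu⟩ := Quotient.exact hu
  obtain ⟨x', hx', hxv⟩ := Quotient.exact hv
  rw [← hxu, ← hxv, det2_smul_left, det2_smul_right]
  exact mul_mem_cosetSet_of_mem hx (mul_mem_cosetSet_of_mem hx' ⟨y, hy, hyd⟩)

lemma mem_rrel_iff {u v : {w : Fin 2 → F // w ≠ 0}} {g : CC F K} :
    (⟦u⟧ₖ, ⟦v⟧ₖ) ∈ rrel F K g ↔ ∃ y : Fˣ, (y : CC F K) = g ∧ (y : F) • u.1 = v.1 := by
  refine ⟨fun ⟨u', v', y, hu, hv, hy, hyv⟩ => ?_, fun ⟨y, hy, hyv⟩ => ⟨u, v, y, rfl, rfl, hy, hyv⟩⟩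
  obtain ⟨x, hx, hxu⟩ := Quotient.exact hu
  obtain ⟨x', hx', hxv⟩ := Quotient.exact hv
  refine ⟨x' * y * x⁻¹, ?_, ?_⟩
  · rw [mul_comm x' y, mul_assoc, QuotientGroup.mk_mul_of_mem _ (K.mul_mem hx' (K.inv_mem hx)), hy]
  · simp only [← hxu, ← hxv, ← hyv, ← Units.smul_def, mul_smul, inv_smul_smul]

lemma rrel_swap {α β : Om F K} {g : CC F K} (hαβ : (α, β) ∈ rrel F K g) :
    (β, α) ∈ rrel F K g⁻¹ := by
  induction α, β using Quotient.inductionOn₂ with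
  | h u v =>
    obtain ⟨y, hy, hyv⟩ := mem_rrel_iff.1 hαβ
    refine mem_rrel_iff.2 ⟨y⁻¹, by rw [QuotientGroup.mk_inv, hy], ?_⟩
    rw [← hyv, ← Units.smul_def, ← Units.smul_def, inv_smul_smul]

lemma srel_swap (hK : (-1 : Fˣ) ∈ K) {α β : Om F K} {g : CC F K} (hαβ : (α, β) ∈ srel F K g) :
    (β, α) ∈ srel F K g := by
  induction α, β using Quotient.inductionOn₂ with
  | h u v => rw [mem_srel_iff, det2_swap, neg_mem_cosetSet_iff hK]; exact mem_srel_iff.1 hαβ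

lemma mem_rrel_iff_of_smul_eq {u v : {w : Fin 2 → F // w ≠ 0}} {y : Fˣ} (hv : (y : F) • u.1 = v.1)
    {g : CC F K} : (⟦u⟧ₖ, ⟦v⟧ₖ) ∈ rrel F K g ↔ g = y := by
  refine mem_rrel_iff.trans ⟨fun ⟨z, hz, hzv⟩ => ?_, fun hg => ⟨y, hg.symm, hv⟩⟩
  rw [← hz, Units.ext (smul_left_injective F u.2 (hzv.trans hv.symm))]

lemma notMem_rrel_of_det2_ne_zero {u v : {w : Fin 2 → F // w ≠ 0}} (hd : det2 u.1 v.1 ≠ 0)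
    (g : CC F K) : (⟦u⟧ₖ, ⟦v⟧ₖ) ∉ rrel F K g := by
  intro huv
  obtain ⟨y, -, hyv⟩ := mem_rrel_iff.1 huv
  rw [← hyv, det2_smul_right, det2_self, mul_zero] at hd
  exact hd rfl

variable [Fintype F]

lemma sum_boole_mul_card (P : Om F K → Prop) [DecidablePred P] (Q : (Fin 2 → F) → Prop)
    (hQ : ∀ w, Q w → w ≠ 0) (hPQ : ∀ w : {w : Fin 2 → F // w ≠ 0}, P ⟦w⟧ₖ ↔ Q w) :
    (∑ β, if P β then (1 : ℤ) else 0) * Nat.card K = Nat.card {w // Q w} := by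
  calc (∑ β, if P β then (1 : ℤ) else 0) * Nat.card K
      = ∑ β, ∑ _w : {w // ⟦w⟧ₖ = β}, if P β then (1 : ℤ) else 0 := by
        rw [Finset.sum_mul]
        simp only [Finset.sum_const, Finset.card_univ, Fintype.card_eq_nat_card,
          card_fiber, nsmul_eq_mul, mul_comm]
    _ = ∑ w : {w : Fin 2 → F // w ≠ 0}, if Q w then (1 : ℤ) else 0 := by
        rw [Fintype.sum_fiberwise' (fun w => ⟦w⟧ₖ) (fun β => if P β then (1 : ℤ) else 0)]
        simp only [hPQ]
    _ = Nat.card {w // Q w} := by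
        rw [Finset.sum_boole, ← Nat.card_congr (Equiv.subtypeSubtypeEquivSubtype (hQ _)),
          Nat.card_eq_fintype_card, Fintype.card_subtype]

lemma natCast_card_ne_zero : (Nat.card K : ℤ) ≠ 0 := Nat.cast_ne_zero.2 Nat.card_pos.ne'

lemma sum_Amat_row (g : CC F K) (α : Om F K) : ∑ β, Amat F K g α β = 1 := by
  induction α using Quotient.inductionOn with
  | h u =>
    have hcount := sum_boole_mul_card (fun β => (⟦u⟧ₖ, β) ∈ rrel F K g)
      (· ∈ (fun y : Fˣ => (y : F) • u.1) '' (QuotientGroup.mk ⁻¹' {g}))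
      (fun _ ⟨y, _, hyw⟩ => hyw ▸ smul_ne_zero y.ne_zero u.2) (fun _ => mem_rrel_iff)
    rw [Nat.card_image_of_injective (fun y y' hyy' => Units.ext (smul_left_injective F u.2 hyy')),
      QuotientGroup.card_preimage_mk, Nat.card_unique (α := ({g} : Set (CC F K))),
      mul_one] at hcount
    exact mul_right_cancel₀ natCast_card_ne_zero (hcount.trans (one_mul _).symm)

lemma sum_Amat_col (g : CC F K) (β : Om F K) : ∑ α, Amat F K g α β = 1 := by
  rw [← sum_Amat_row g⁻¹ β]
  exact Finset.sum_congr rfl fun α _ =>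
    if_congr ⟨rrel_swap, fun h => inv_inv g ▸ rrel_swap h⟩ rfl rfl

lemma sum_Bmat_row (g : CC F K) (α : Om F K) : ∑ β, Bmat F K g α β = Fintype.card F := by
  induction α using Quotient.inductionOn with
  | h u =>
    have hcount := sum_boole_mul_card (fun β => (⟦u⟧ₖ, β) ∈ srel F K g)
      (fun w => det2 u.1 w ∈ cosetSet g)
      (fun w hw h0 => zero_notMem_cosetSet (by simpa [h0, det2] using hw)) (fun _ => mem_srel_iff)
    rw [card_det2_mem_cosetSet u.2, Nat.card_eq_fintype_card (α := F), Nat.cast_mul,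
      mul_comm (Nat.card K : ℤ)] at hcount
    exact mul_right_cancel₀ natCast_card_ne_zero hcount

lemma sum_Bmat_col (hK : (-1 : Fˣ) ∈ K) (g : CC F K) (β : Om F K) :
    ∑ α, Bmat F K g α β = Fintype.card F := by
  rw [← sum_Bmat_row g β]
  exact Finset.sum_congr rfl fun α _ => if_congr ⟨srel_swap hK, srel_swap hK⟩ rfl rfl

section Product

variable {h g : CC F K} {u v : {w : Fin 2 → F // w ≠ 0}}

lemma mul_Bmat_apply_mul_card :
    (Bmat F K h * Bmat F K g) ⟦u⟧ₖ ⟦v⟧ₖ * Nat.card K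
      = Nat.card {w // det2 u.1 w ∈ cosetSet h ∧ det2 w v.1 ∈ cosetSet g} := by
  rw [Matrix.mul_apply]
  simp only [Bmat, Matrix.of_apply, ite_zero_mul_ite_zero, mul_one]
  exact sum_boole_mul_card (fun γ => (⟦u⟧ₖ, γ) ∈ srel F K h ∧ (γ, ⟦v⟧ₖ) ∈ srel F K g)
    (fun w => det2 u.1 w ∈ cosetSet h ∧ det2 w v.1 ∈ cosetSet g)
    (fun w hw h0 => zero_notMem_cosetSet (by simpa [h0, det2] using hw.1))
    (fun _ => and_congr mem_srel_iff mem_srel_iff)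

lemma mul_Bmat_apply_of_det2_ne_zero (hd : det2 u.1 v.1 ≠ 0) :
    (Bmat F K h * Bmat F K g) ⟦u⟧ₖ ⟦v⟧ₖ = Nat.card K := by
  refine mul_right_cancel₀ natCast_card_ne_zero (mul_Bmat_apply_mul_card.trans ?_)
  rw [card_det2_mem_cosetSet_and hd, Nat.cast_mul]

lemma mul_Bmat_apply_of_smul_eq (hK : (-1 : Fˣ) ∈ K) {y : Fˣ} (hv : (y : F) • u.1 = v.1) :
    (Bmat F K h * Bmat F K g) ⟦u⟧ₖ ⟦v⟧ₖ = if h⁻¹ * g = y then (Fintype.card F : ℤ) else 0 := by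
  have hcond : ∀ w, det2 u.1 w ∈ cosetSet h ∧ det2 w v.1 ∈ cosetSet g ↔
      h⁻¹ * g = y ∧ det2 u.1 w ∈ cosetSet h := by
    intro w
    rw [← hv, det2_smul_right, det2_swap u.1 w, mul_neg, neg_mem_cosetSet_iff hK,
      units_mul_mem_cosetSet_iff, mem_cosetSet_and_mem_cosetSet_iff, eq_inv_mul_iff_mul_eq,
      inv_mul_eq_iff_eq_mul, mul_comm, eq_comm]
  refine mul_right_cancel₀ natCast_card_ne_zero (mul_Bmat_apply_mul_card.trans ?_)
  rw [Nat.card_congr (Equiv.subtypeEquivRight hcond)]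
  split_ifs with hy
  · simp only [hy, true_and, card_det2_mem_cosetSet u.2, Nat.card_eq_fintype_card (α := F)]
    push_cast
    ring
  · simp [hy]

end Product

lemma mul_Bmat_apply (hK : (-1 : Fˣ) ∈ K) (h g : CC F K) (α β : Om F K) :
    (Bmat F K h * Bmat F K g) α β
      = Fintype.card F * Amat F K (h⁻¹ * g) α β + Nat.card K * (1 - AC F K α β) := by
  induction α, β using Quotient.inductionOn₂ with
  | h u v =>
    simp only [AC, Amat, Matrix.sum_apply, Matrix.of_apply]
    by_cases hd : det2 u.1 v.1 = 0
    · obtain ⟨t, ht⟩ := exists_smul_eq_of_det2_eq_zero u.2 hd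
      have ht0 : t ≠ 0 := by
        rintro rfl
        exact v.2 (by rw [← ht, zero_smul])
      have hv : ((Units.mk0 t ht0 : Fˣ) : F) • u.1 = v.1 := ht
      simp only [mul_Bmat_apply_of_smul_eq hK hv, mem_rrel_iff_of_smul_eq hv, Finset.sum_ite_eq',
        Finset.mem_univ, if_true]
      split_ifs <;> ring
    · simp only [mul_Bmat_apply_of_det2_ne_zero hd, notMem_rrel_of_det2_ne_zero hd, if_false,
        Finset.sum_const_zero]
      ring

end Points

end Tatra

open Tatra in
theorem stmt_3_general (F : Type) [Field F] [Fintype F] (K : Subgroup Fˣ) (q n : ℕ)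
    (hq : Fintype.card F = q) (hn : K.index = n)
    (heven : Even (q * ((q - 1) / n))) (h g : CC F K) :
    Bmat F K h * Bmat F K g
      = (q : ℤ) • Amat F K (h⁻¹ * g) + (((q - 1) / n : ℕ) : ℤ) • (Jmat F K - AC F K) ∧
    (∀ α : Om F K, ∑ β : Om F K, Amat F K g α β = 1) ∧
    (∀ β : Om F K, ∑ α : Om F K, Amat F K g α β = 1) ∧
    (∀ α : Om F K, ∑ β : Om F K, Bmat F K g α β = (q : ℤ)) ∧
    (∀ β : Om F K, ∑ α : Om F K, Bmat F K g α β = (q : ℤ)) := by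
  have hm : Nat.card K = (q - 1) / n := by rw [card_eq_card_sub_one_div_index, hq, hn]
  have hK : (-1 : Fˣ) ∈ K := neg_one_mem_of_even_card_mul (by rwa [hq, hm])
  refine ⟨?_, sum_Amat_row g, sum_Amat_col g, fun α => hq ▸ sum_Bmat_row g α,
    fun β => hq ▸ sum_Bmat_col hK g β⟩
  ext α β
  rw [mul_Bmat_apply hK, hm, hq]
  simp only [Matrix.add_apply, Matrix.smul_apply, Matrix.sub_apply, Jmat, Matrix.of_apply,
    smul_eq_mul]

open Tatra in
/-- `B_hB_g = q·A_{h⁻¹g} + m·(J − A_C)`; every row and column sum of `A_g`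
equals `1` and every row and column sum of `B_g` equals `q`. -/
theorem stmt_3 (F : Type) [Field F] [Fintype F] (K : Subgroup Fˣ) (q n : ℕ)
    (hq : Fintype.card F = q) (hn : K.index = n) (hnd : n ∣ q - 1)
    (heven : Even (q * ((q - 1) / n))) (h g : CC F K) :
    Bmat F K h * Bmat F K g
      = (q : ℤ) • Amat F K (h⁻¹ * g) + (((q - 1) / n : ℕ) : ℤ) • (Jmat F K - AC F K) ∧
    (∀ α : Om F K, ∑ β : Om F K, Amat F K g α β = 1) ∧
    (∀ β : Om F K, ∑ α : Om F K, Amat F K g α β = 1) ∧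
    (∀ α : Om F K, ∑ β : Om F K, Bmat F K g α β = (q : ℤ)) ∧
    (∀ β : Om F K, ∑ α : Om F K, Bmat F K g α β = (q : ℤ)) :=
  stmt_3_general F K q n hq hn heven h g
end

section
/- Assume n ≥ 3. Suppose f is a permutation of Ω with r_g^f = r_g and s_g^f = s_g for all g ∈ C, and suppose f fixes every line Cα setwise. If n is odd then f is the identity. If n is even then f is the identity or the permutation α ↦ hα, where h is the unique element of order 2 of C; moreover, when n is even, the permutation α ↦ hα does fix every r_g, every s_g, and every line setwise. -/
/-!
Since `f` fixes every line `Cα` setwise, it acts pointwise as `f α = c(α) α` for some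
`c(α) ∈ C`, and a permutation of this form preserves every `s_g` only if `c(α) c(β) = 1`
whenever `det(α, β) ≠ 0`, because `det(a u, b v) = a b det(u, v)`. Testing this on the
pairwise independent vectors `e₁, e₂, e₁ + e₂`, and then every vector against `e₁` or `e₂`,
shows that `c` is a constant with `c² = 1`. In the cyclic group `C` this leaves `c = 1` for
odd `n`, and `c ∈ {1, h}` for even `n`. Conversely, multiplication by `h` commutes with the
action of `C`, preserves lines, and scales determinants by `h² = 1`.
-/

open Classical Matrix

theorem Function.Involutive.image_eq_self_of_mapsTo {α : Type*} {f : α → α}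
    (hf : Function.Involutive f) {s : Set α} (h : Set.MapsTo f s s) : f '' s = s :=
  h.image_subset.antisymm fun x hx => ⟨f x, h hx, hf x⟩

theorem IsCyclic.eq_of_orderOf_eq_two {G : Type*} [Group G] [Finite G] [IsCyclic G] {a b : G}
    (ha : orderOf a = 2) (hb : orderOf b = 2) : a = b := by
  have := Fintype.ofFinite G
  have h2 : 2 ∣ Fintype.card G := by
    rw [← Nat.card_eq_fintype_card, ← ha]
    exact orderOf_dvd_natCard a
  have hcard := IsCyclic.card_orderOf_eq_totient h2
  rw [Nat.totient_two] at hcard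
  exact Finset.card_le_one.1 hcard.le a (by simpa using ha) b (by simpa using hb)

theorem eq_one_of_mul_self_eq_one_of_odd_card {G : Type*} [Group G] (hG : Odd (Nat.card G))
    {a : G} (ha : a * a = 1) : a = 1 := by
  have hodd : Odd (orderOf a) := hG.of_dvd_nat (orderOf_dvd_natCard a)
  have h2 : orderOf a ∣ 2 := orderOf_dvd_of_pow_eq_one (by rwa [sq])
  rcases (Nat.dvd_prime Nat.prime_two).1 h2 with h | h
  · exact orderOf_eq_one_iff.1 h
  · exact absurd (h ▸ hodd) (by decide)

namespace Tatra

section Vectors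

variable {F : Type} [Field F]

instance : MulAction Fˣ {w : Fin 2 → F // w ≠ 0} where
  smul y u := ⟨(y : F) • u.1, (smul_ne_zero_iff_right y.ne_zero).2 u.2⟩
  one_smul u := Subtype.ext (one_smul F u.1)
  mul_smul y z u := Subtype.ext (mul_smul (y : F) (z : F) u.1)

@[simp]
theorem coe_units_smul (y : Fˣ) (u : {w : Fin 2 → F // w ≠ 0}) : (y • u).1 = (y : F) • u.1 :=
  rfl

theorem dt_smul_smul (a b : Fˣ) (u v : {w : Fin 2 → F // w ≠ 0}) :
    dt F (a • u) (b • v) = a * b * dt F u v := by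
  simp only [dt, coe_units_smul, Pi.smul_apply, smul_eq_mul]
  ring

end Vectors

variable {F : Type} [Field F] {K : Subgroup Fˣ}

-- Without it, instance search fails on cancellation classes such as `IsCancelMul (Fˣ ⧸ K)`.
abbrev CC.commGroup : CommGroup (CC F K) := QuotientGroup.Quotient.commGroup K

attribute [local instance] CC.commGroup

abbrev Om.mk (u : {w : Fin 2 → F // w ≠ 0}) : Om F K := Quotient.mk (ksetoid F K) u

theorem ksetoid_smul_smul {y y' : Fˣ} (hy : (y : CC F K) = y') {u u' : {w : Fin 2 → F // w ≠ 0}}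
    (hu : ksetoid F K u u') : ksetoid F K (y • u) (y' • u') := by
  obtain ⟨x, hx, hxu⟩ := hu
  refine ⟨y⁻¹ * y' * x, K.mul_mem (QuotientGroup.eq.1 hy) hx, ?_⟩
  change ((y⁻¹ * y' * x : Fˣ) : F) • (y : F) • u.1 = (y' : F) • u'.1
  rw [← hxu, smul_smul, smul_smul, ← Units.val_mul, ← Units.val_mul, mul_comm _ y,
    mul_assoc y⁻¹, mul_inv_cancel_left]

instance : MulAction (CC F K) (Om F K) where
  smul := Quotient.map₂ (· • ·) fun _ _ hy _ _ hu => ksetoid_smul_smul (Quotient.sound hy) hu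
  one_smul := Quotient.ind fun u => congrArg Om.mk (one_smul Fˣ u)
  mul_smul := by
    rintro ⟨y⟩ ⟨z⟩ ⟨u⟩
    exact congrArg Om.mk (mul_smul y z u)

theorem mem_rrel_iff_s8 {g : CC F K} {α β : Om F K} : (α, β) ∈ rrel F K g ↔ β = g • α := by
  constructor
  · rintro ⟨u, v, y, rfl, rfl, rfl, hv⟩
    exact congrArg Om.mk (Subtype.ext hv.symm)
  · rintro rfl
    induction g using QuotientGroup.induction_on
    induction α using Quotient.ind
    exact ⟨_, _, _, rfl, rfl, rfl, rfl⟩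

theorem line_eq_orbit (α : Om F K) : line F K α = MulAction.orbit (CC F K) α := by
  ext β
  simp only [line, Set.mem_ofPred_eq, mem_rrel_iff_s8, MulAction.mem_orbit_iff, eq_comm]

theorem mk_mem_srel_iff {g : CC F K} {u v : {w : Fin 2 → F // w ≠ 0}} :
    (Om.mk u, Om.mk v) ∈ srel F K g ↔ ∃ y : Fˣ, (y : CC F K) = g ∧ (y : F) = dt F u v := by
  refine ⟨?_, fun ⟨y, hy, hyd⟩ => ⟨u, v, y, rfl, rfl, hy, hyd⟩⟩
  rintro ⟨u', v', y, hu, hv, rfl, hyd⟩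
  obtain ⟨a, ha, hau⟩ := Quotient.exact hu
  obtain ⟨b, hb, hbv⟩ := Quotient.exact hv
  refine ⟨y * (a * b), QuotientGroup.mk_mul_of_mem y (K.mul_mem ha hb), ?_⟩
  rw [show u = a • u' from Subtype.ext hau.symm, show v = b • v' from Subtype.ext hbv.symm,
    dt_smul_smul, ← hyd]
  push_cast
  ring

theorem eq_of_mem_srel {g g' : CC F K} {α β : Om F K} (h : (α, β) ∈ srel F K g)
    (h' : (α, β) ∈ srel F K g') : g = g' := by
  induction α using Quotient.ind
  induction β using Quotient.ind
  obtain ⟨y, rfl, hy⟩ := mk_mem_srel_iff.1 h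
  obtain ⟨z, rfl, hz⟩ := mk_mem_srel_iff.1 h'
  rw [Units.ext (hy.trans hz.symm)]

theorem smul_mem_srel_smul {g : CC F K} {α β : Om F K} (h : (α, β) ∈ srel F K g) (a b : CC F K) :
    (a • α, b • β) ∈ srel F K (a * b * g) := by
  obtain ⟨u, v, y, rfl, rfl, rfl, hyd⟩ := h
  induction a using QuotientGroup.induction_on with | H a => ?_
  induction b using QuotientGroup.induction_on with | H b => ?_
  refine ⟨a • u, b • v, a * b * y, rfl, rfl, rfl, ?_⟩
  rw [dt_smul_smul, ← hyd, Units.val_mul, Units.val_mul]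

theorem mk_mem_srel_of_dt_ne_zero {u v : {w : Fin 2 → F // w ≠ 0}} (h : dt F u v ≠ 0) :
    (Om.mk u, Om.mk v) ∈ srel F K (Units.mk0 _ h : CC F K) :=
  ⟨u, v, _, rfl, rfl, rfl, rfl⟩

theorem exists_eq_const_of_mul_eq_one {G : Type*} [Group G]
    {φ : {w : Fin 2 → F // w ≠ 0} → G} (h : ∀ u v, dt F u v ≠ 0 → φ u * φ v = 1) :
    ∃ c, c * c = 1 ∧ ∀ u, φ u = c := by
  let e₁ : {w : Fin 2 → F // w ≠ 0} := ⟨![1, 0], by simp [funext_iff]⟩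
  let e₂ : {w : Fin 2 → F // w ≠ 0} := ⟨![0, 1], by simp [funext_iff]⟩
  let e₃ : {w : Fin 2 → F // w ≠ 0} := ⟨![1, 1], by simp [funext_iff]⟩
  have h₁₂ : φ e₁ * φ e₂ = 1 := h _ _ (by simp [e₁, e₂, dt])
  have h₁₃ : φ e₁ * φ e₃ = 1 := h _ _ (by simp [e₁, e₃, dt])
  have h₂₃ : φ e₂ * φ e₃ = 1 := h _ _ (by simp [e₂, e₃, dt])
  have h₂₂ : φ e₂ * φ e₂ = 1 := by rwa [← mul_left_cancel (h₁₂.trans h₁₃.symm)] at h₂₃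
  have hinv : (φ e₂)⁻¹ = φ e₂ := inv_eq_of_mul_eq_one_right h₂₂
  refine ⟨φ e₂, h₂₂, fun u => ?_⟩
  by_cases hu : u.1 0 = 0
  · have hu₁ : u.1 1 ≠ 0 := fun hu₁ => u.2 (funext fun i => by fin_cases i <;> assumption)
    rw [eq_inv_of_mul_eq_one_left (h u e₁ (by simp [e₁, dt, hu₁])),
      eq_inv_of_mul_eq_one_left h₁₂, hinv, hinv]
  · rw [eq_inv_of_mul_eq_one_left (h u e₂ (by simp [e₂, dt, hu])), hinv]

section Automorphism

variable {f : Equiv.Perm (Om F K)}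

theorem exists_smul_eq_of_image_line_eq (hl : ∀ α, (fun β => f β) '' line F K α = line F K α)
    (α : Om F K) : ∃ c : CC F K, f α = c • α := by
  have hα : f α ∈ line F K α := hl α ▸ Set.mem_image_of_mem _ (by
    rw [line_eq_orbit]; exact MulAction.mem_orbit_self α)
  obtain ⟨c, hc⟩ := MulAction.mem_orbit_iff.1 (line_eq_orbit α ▸ hα)
  exact ⟨c, hc.symm⟩

theorem mul_eq_one_of_mem_srel (hs : ∀ g, relImage F K f (srel F K g) = srel F K g)
    {c : Om F K → CC F K} (hc : ∀ α, f α = c α • α) {g : CC F K} {α β : Om F K}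
    (h : (α, β) ∈ srel F K g) : c α * c β = 1 := by
  have hf : (f α, f β) ∈ srel F K g := hs g ▸ ⟨_, h, rfl⟩
  rw [hc, hc] at hf
  exact mul_eq_right.1 (eq_of_mem_srel (smul_mem_srel_smul h _ _) hf)

theorem exists_smul_eq_of_preserves (hs : ∀ g, relImage F K f (srel F K g) = srel F K g)
    (hl : ∀ α, (fun β => f β) '' line F K α = line F K α) :
    ∃ c : CC F K, c * c = 1 ∧ ∀ α, f α = c • α := by
  choose c hc using exists_smul_eq_of_image_line_eq hl
  obtain ⟨c₀, hc₀, hφ⟩ := exists_eq_const_of_mul_eq_one (φ := fun u => c (Om.mk u))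
    fun u v huv => mul_eq_one_of_mem_srel hs hc (mk_mem_srel_of_dt_ne_zero huv)
  exact ⟨c₀, hc₀, Quotient.ind fun u => (hc _).trans (by rw [← hφ u])⟩

theorem preserves_of_smul_eq {h : CC F K} (hh : h * h = 1) (hf : ∀ α, f α = h • α) :
    (∀ g, relImage F K f (rrel F K g) = rrel F K g) ∧
    (∀ g, relImage F K f (srel F K g) = srel F K g) ∧
    (∀ α, (fun β => f β) '' line F K α = line F K α) := by
  have hinv : Function.Involutive f := fun α => by rw [hf, hf, smul_smul, hh, one_smul]
  refine ⟨fun g => (hinv.prodMap hinv).image_eq_self_of_mapsTo ?_,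
    fun g => (hinv.prodMap hinv).image_eq_self_of_mapsTo ?_,
    fun α => hinv.image_eq_self_of_mapsTo ?_⟩
  · rintro ⟨α, β⟩ hαβ
    rw [mem_rrel_iff_s8] at hαβ
    change (f α, f β) ∈ rrel F K g
    rw [mem_rrel_iff_s8, hf, hf, hαβ, smul_comm]
  · rintro ⟨α, β⟩ hαβ
    simpa [hf, hh] using smul_mem_srel_smul hαβ h h
  · intro β hβ
    rw [line_eq_orbit] at hβ ⊢
    rw [hf]
    exact MulAction.mem_orbit_of_mem_orbit h hβ

end Automorphism

end Tatra

open Tatra in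
theorem stmt_8_general (F : Type) [Field F] [Fintype F] (K : Subgroup Fˣ) (n : ℕ)
    (hn : K.index = n)
    (f : Equiv.Perm (Om F K))
    (hs : ∀ g : CC F K, relImage F K f (srel F K g) = srel F K g)
    (hl : ∀ α : Om F K, (fun β => f β) '' line F K α = line F K α) :
    (Odd n → f = Equiv.refl (Om F K)) ∧
    (Even n → ∀ h : CC F K, orderOf h = 2 →
      (f = Equiv.refl (Om F K) ∨ ∀ α : Om F K, (α, f α) ∈ rrel F K h) ∧
      (∀ f' : Equiv.Perm (Om F K), (∀ α : Om F K, (α, f' α) ∈ rrel F K h) →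
        (∀ g : CC F K, relImage F K f' (rrel F K g) = rrel F K g) ∧
        (∀ g : CC F K, relImage F K f' (srel F K g) = srel F K g) ∧
        (∀ α : Om F K, (fun β => f' β) '' line F K α = line F K α))) := by
  obtain ⟨c, hcc, hfc⟩ := exists_smul_eq_of_preserves hs hl
  have hid : c = 1 → f = Equiv.refl (Om F K) := fun hc =>
    Equiv.ext fun α => by rw [hfc, hc, one_smul, Equiv.refl_apply]
  have hcard : Nat.card (CC F K) = n := hn
  refine ⟨fun hodd => hid (eq_one_of_mul_self_eq_one_of_odd_card (hcard ▸ hodd) hcc),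
    fun _ h hh => ⟨?_, fun f' hf' => preserves_of_smul_eq ?_ fun α => mem_rrel_iff_s8.1 (hf' α)⟩⟩
  · by_cases hc : c = 1
    · exact Or.inl (hid hc)
    · have : IsCyclic (CC F K) := isCyclic_of_surjective _ (QuotientGroup.mk'_surjective K)
      refine Or.inr fun α => mem_rrel_iff_s8.2 ?_
      rw [hfc, IsCyclic.eq_of_orderOf_eq_two (orderOf_eq_prime (by rwa [sq]) hc) hh]
  · rw [← sq, ← hh, pow_orderOf_eq_one]

open Tatra in
/-- kernel of the action on lines: assume `n ≥ 3` and let `f` be a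
permutation of `Ω` fixing every `r_g`, every `s_g`, and every line setwise. If `n` is odd
then `f = id`; if `n` is even then `f = id` or `f` is the permutation `α ↦ hα` for the
unique element `h` of order `2` of `C`; moreover, for even `n`, any permutation
`α ↦ hα` does fix every `r_g`, every `s_g`, and every line setwise. -/
theorem stmt_8 (F : Type) [Field F] [Fintype F] (K : Subgroup Fˣ) (q n : ℕ)
    (hq : Fintype.card F = q) (hn : K.index = n) (hnd : n ∣ q - 1)
    (heven : Even (q * ((q - 1) / n))) (hn3 : 3 ≤ n)
    (f : Equiv.Perm (Om F K))
    (hr : ∀ g : CC F K, relImage F K f (rrel F K g) = rrel F K g)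
    (hs : ∀ g : CC F K, relImage F K f (srel F K g) = srel F K g)
    (hl : ∀ α : Om F K, (fun β => f β) '' line F K α = line F K α) :
    (Odd n → f = Equiv.refl (Om F K)) ∧
    (Even n → ∀ h : CC F K, orderOf h = 2 →
      (f = Equiv.refl (Om F K) ∨ ∀ α : Om F K, (α, f α) ∈ rrel F K h) ∧
      (∀ f' : Equiv.Perm (Om F K), (∀ α : Om F K, (α, f' α) ∈ rrel F K h) →
        (∀ g : CC F K, relImage F K f' (rrel F K g) = rrel F K g) ∧
        (∀ g : CC F K, relImage F K f' (srel F K g) = srel F K g) ∧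
        (∀ α : Om F K, (fun β => f' β) '' line F K α = line F K α))) :=
  stmt_8_general F K n hn f hs hl
end

section
/- For all h,g ∈ C there exists a bijection f of Ω with s_h^f = s_g; that is, the graphs (Ω, s_h) and (Ω, s_g) are isomorphic. -/
open Classical Matrix

/-! A matrix `T ∈ GL₂(F)` permutes `Ω` via `Kv ↦ K(Tv)` and multiplies every determinant by
`det T`, so it carries `s_h` onto `s_{(det T)h}`; as `det` maps `GL₂(F)` onto `Fˣ`, every
`g ∈ C` is reached. -/

namespace Tatra

variable {F : Type} [Field F] {K : Subgroup Fˣ}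

def nonzeroMulVec (T : GL (Fin 2) F) : {w : Fin 2 → F // w ≠ 0} ≃ {w : Fin 2 → F // w ≠ 0} :=
  let e := (Matrix.GeneralLinearGroup.toLin T).toLinearEquiv
  e.toEquiv.subtypeEquiv fun _ => e.map_ne_zero_iff.symm

@[simp]
lemma nonzeroMulVec_apply_coe (T : GL (Fin 2) F) (u : {w : Fin 2 → F // w ≠ 0}) :
    (nonzeroMulVec T u : Fin 2 → F) = (T : Matrix (Fin 2) (Fin 2) F) *ᵥ u.1 := rfl

lemma dt_nonzeroMulVec (T : GL (Fin 2) F) (u v : {w : Fin 2 → F // w ≠ 0}) :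
    dt F (nonzeroMulVec T u) (nonzeroMulVec T v) =
      (Matrix.GeneralLinearGroup.det T : F) * dt F u v := by
  simp only [dt, nonzeroMulVec_apply_coe, Matrix.mulVec, dotProduct, Fin.sum_univ_two,
    Matrix.GeneralLinearGroup.val_det_apply, Matrix.det_fin_two]
  ring

lemma ksetoid_nonzeroMulVec_iff (T : GL (Fin 2) F) (u v : {w : Fin 2 → F // w ≠ 0}) :
    ksetoid F K u v ↔ ksetoid F K (nonzeroMulVec T u) (nonzeroMulVec T v) := by
  let e := (Matrix.GeneralLinearGroup.toLin T).toLinearEquiv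
  refine exists_congr fun x => and_congr_right fun _ => ?_
  change _ ↔ (x : F) • e u.1 = e v.1
  rw [← e.map_smul, e.injective.eq_iff]

def glPerm (K : Subgroup Fˣ) (T : GL (Fin 2) F) : Equiv.Perm (Om F K) :=
  Quotient.congr (nonzeroMulVec T) (ksetoid_nonzeroMulVec_iff T)

lemma glPerm_mk (T : GL (Fin 2) F) (u : {w : Fin 2 → F // w ≠ 0}) :
    glPerm K T (Quotient.mk _ u) = Quotient.mk _ (nonzeroMulVec T u) := rfl

lemma relImage_glPerm_srel (T : GL (Fin 2) F) (h : CC F K) :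
    relImage F K (glPerm K T) (srel F K h) =
      srel F K (QuotientGroup.mk (Matrix.GeneralLinearGroup.det T) * h) := by
  ext p
  constructor
  · rintro ⟨⟨_, _⟩, ⟨u, v, y, rfl, rfl, rfl, hy⟩, rfl⟩
    exact ⟨nonzeroMulVec T u, nonzeroMulVec T v, Matrix.GeneralLinearGroup.det T * y, rfl, rfl,
      rfl, by rw [dt_nonzeroMulVec, ← hy, Units.val_mul]⟩
  · obtain ⟨α, β⟩ := p
    rintro ⟨u, v, y, rfl, rfl, hy, hdt⟩
    refine ⟨(Quotient.mk _ ((nonzeroMulVec T).symm u), Quotient.mk _ ((nonzeroMulVec T).symm v)),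
      ⟨_, _, (Matrix.GeneralLinearGroup.det T)⁻¹ * y, rfl, rfl, ?_, ?_⟩, ?_⟩
    · rw [QuotientGroup.mk_mul, hy, QuotientGroup.mk_inv, inv_mul_cancel_left]
    · have hscale := dt_nonzeroMulVec T ((nonzeroMulVec T).symm u) ((nonzeroMulVec T).symm v)
      rw [Equiv.apply_symm_apply, Equiv.apply_symm_apply] at hscale
      rw [Units.val_mul, hdt, hscale, Units.inv_mul_cancel_left]
    · simp only [glPerm_mk, Equiv.apply_symm_apply]

end Tatra

open Tatra in
theorem stmt_9_general (F : Type) [Field F] (K : Subgroup Fˣ) (h g : CC F K) :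
    ∃ f : Equiv.Perm (Om F K), relImage F K f (srel F K h) = srel F K g := by
  obtain ⟨c, hc⟩ := QuotientGroup.mk_surjective (g * h⁻¹)
  obtain ⟨T, rfl⟩ := Matrix.GeneralLinearGroup.det_surjective (n := Fin 2) c
  exact ⟨glPerm K T, by rw [relImage_glPerm_srel, hc, inv_mul_cancel_right]⟩

open Tatra in
/-- for all `h, g ∈ C` there is a bijection `f` of `Ω` with `s_h^f = s_g`,
i.e. the graphs `(Ω, s_h)` and `(Ω, s_g)` are isomorphic. -/
theorem stmt_9 (F : Type) [Field F] [Fintype F] (K : Subgroup Fˣ) (q n : ℕ)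
    (hq : Fintype.card F = q) (hn : K.index = n) (hnd : n ∣ q - 1)
    (heven : Even (q * ((q - 1) / n))) (h g : CC F K) :
    ∃ f : Equiv.Perm (Om F K), relImage F K f (srel F K h) = srel F K g :=
  stmt_9_general F K h g
end

section
/- For each g ∈ C and any two pairs (α₁,α₂) and (β₁,β₂) both belonging to r_g (respectively, both belonging to s_g), there exists an invertible 2×2 matrix T over F with det(T) ∈ K such that the permutation f_{T,id} maps α₁ to β₁ and α₂ to β₂. Consequently every basic relation r_g and s_g is a single orbit of the automorphism group of the Tatra scheme acting on Ω×Ω, i.e. the Tatra scheme is schurian. -/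
open Classical Matrix

/-! The group `GL₂(F)` acts on `Ω` by `Kv ↦ K(Tv)`. Such a map commutes with scalars, so it
preserves every `r_c`, and since `det(Tu, Tv) = det T · det(u, v)` it sends `s_c` to
`s_{(det T)c}`; hence it is an automorphism of the scheme as soon as `det T ∈ K` (on the finite
set `Ω × Ω`, mapping a relation into itself means mapping it onto itself).

For transitivity on `s_g`: if `det(u, a)` and `det(v, b)` lie in the same coset `g`, the matrix
`[v b][u a]⁻¹` sends `u ↦ v`, `a ↦ b` and has determinant `det(v, b) / det(u, a) ∈ K`. For `r_g`,
complete `u` and `v` to bases of determinant `1` to get `T ∈ SL₂(F)` with `Tu = v`; it sends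
`K(yu)` to `K(yv) = K(y'v)` whenever `yK = y'K`. -/

namespace Matrix

open GeneralLinearGroup

variable {F : Type} [Field F]

theorem exists_GL_mulVec_eq_pair {u a v b : Fin 2 → F} (h : (of ![u, a]).det ≠ 0)
    (h' : (of ![v, b]).det ≠ 0) :
    ∃ T : GL (Fin 2) F,
      (T : Matrix (Fin 2) (Fin 2) F).det * (of ![u, a]).det = (of ![v, b]).det ∧
      T *ᵥ u = v ∧ T *ᵥ a = b := by
  set M := mkOfDetNeZero (of ![u, a])ᵀ (by rwa [det_transpose])
  set N := mkOfDetNeZero (of ![v, b])ᵀ (by rwa [det_transpose])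
  have hTM : ((N * M⁻¹ : GL (Fin 2) F) : Matrix (Fin 2) (Fin 2) F) * M = N := by
    rw [← coe_mul, inv_mul_cancel_right]
  have hcol (j : Fin 2) : ((N * M⁻¹ : GL (Fin 2) F) : Matrix (Fin 2) (Fin 2) F) *ᵥ
      (M : Matrix (Fin 2) (Fin 2) F).col j = (N : Matrix (Fin 2) (Fin 2) F).col j := by
    rw [← mulVec_single_one, ← mulVec_single_one, mulVec_mulVec, hTM]
  refine ⟨N * M⁻¹, ?_, hcol 0, hcol 1⟩
  simpa [M, N] using congrArg Matrix.det hTM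

theorem exists_det_eq_one_of_ne_zero {u : Fin 2 → F} (hu : u ≠ 0) :
    ∃ w, (of ![u, w]).det = 1 := by
  by_cases h₀ : u 0 = 0
  · have h₁ : u 1 ≠ 0 := fun h₁ => hu (by ext i; fin_cases i <;> assumption)
    exact ⟨![-(u 1)⁻¹, 0], by simp [det_fin_two, h₁]⟩
  · exact ⟨![0, (u 0)⁻¹], by simp [det_fin_two, h₀]⟩

theorem exists_GL_det_eq_one_mulVec_eq {u v : Fin 2 → F} (hu : u ≠ 0) (hv : v ≠ 0) :
    ∃ T : GL (Fin 2) F,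
      GeneralLinearGroup.det T = 1 ∧ (T : Matrix (Fin 2) (Fin 2) F) *ᵥ u = v := by
  obtain ⟨w, hw⟩ := exists_det_eq_one_of_ne_zero hu
  obtain ⟨w', hw'⟩ := exists_det_eq_one_of_ne_zero hv
  obtain ⟨T, hdet, hTu, -⟩ := exists_GL_mulVec_eq_pair (hw ▸ one_ne_zero) (hw' ▸ one_ne_zero)
  exact ⟨T, Units.ext (by simpa [hw, hw'] using hdet), hTu⟩

end Matrix

namespace Tatra

open Matrix.GeneralLinearGroup

variable {F : Type} [Field F]

theorem dt_eq_det (u v : {w : Fin 2 → F // w ≠ 0}) : dt F u v = (of ![u.1, v.1]).det := by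
  simp [dt, det_fin_two]

noncomputable def mulVecEquiv (T : GL (Fin 2) F) :
    {w : Fin 2 → F // w ≠ 0} ≃ {w : Fin 2 → F // w ≠ 0} :=
  (toLin T).toLinearEquiv.toEquiv.subtypeEquiv fun _ =>
    (toLin T).toLinearEquiv.map_ne_zero_iff.symm

@[simp]
theorem coe_mulVecEquiv (T : GL (Fin 2) F) (u : {w : Fin 2 → F // w ≠ 0}) :
    (mulVecEquiv T u : Fin 2 → F) = (T : Matrix (Fin 2) (Fin 2) F) *ᵥ u := rfl

theorem dt_mulVecEquiv (T : GL (Fin 2) F) (u v : {w : Fin 2 → F // w ≠ 0}) :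
    dt F (mulVecEquiv T u) (mulVecEquiv T v) = det T * dt F u v := by
  simp only [dt, coe_mulVecEquiv, val_det_apply, det_fin_two, mulVec, dotProduct,
    Fin.sum_univ_two]
  ring

variable {K : Subgroup Fˣ}

noncomputable def linPerm (T : GL (Fin 2) F) : Equiv.Perm (Om F K) :=
  Quotient.congr (mulVecEquiv T) fun u v =>
    exists_congr fun x => and_congr_right fun _ => by
      rw [coe_mulVecEquiv, coe_mulVecEquiv, ← mulVec_smul,
        (mulVec_injective_iff_isUnit.mpr T.isUnit).eq_iff]

theorem linPerm_mk (T : GL (Fin 2) F) (u : {w : Fin 2 → F // w ≠ 0}) :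
    linPerm T (Quotient.mk (ksetoid F K) u) = Quotient.mk (ksetoid F K) (mulVecEquiv T u) := rfl

theorem implements_linPerm (T : GL (Fin 2) F) :
    Implements F K T (RingEquiv.refl F) (linPerm T) :=
  fun u _ h => (linPerm_mk T u).trans (congrArg _ (Subtype.ext h))

theorem mapsTo_linPerm_rrel (T : GL (Fin 2) F) (c : CC F K) :
    Set.MapsTo (Prod.map (linPerm T) (linPerm T)) (rrel F K c) (rrel F K c) := by
  rintro ⟨α, β⟩ ⟨u, v, y, rfl, rfl, hy, hyuv⟩
  exact ⟨mulVecEquiv T u, mulVecEquiv T v, y, rfl, rfl, hy, by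
    rw [coe_mulVecEquiv, coe_mulVecEquiv, ← mulVec_smul, hyuv]⟩

theorem mapsTo_linPerm_srel (T : GL (Fin 2) F) (c : CC F K) :
    Set.MapsTo (Prod.map (linPerm T) (linPerm T)) (srel F K c) (srel F K (det T * c)) := by
  rintro ⟨α, β⟩ ⟨u, v, y, rfl, rfl, rfl, hyuv⟩
  exact ⟨mulVecEquiv T u, mulVecEquiv T v, det T * y, rfl, rfl, rfl, by
    rw [dt_mulVecEquiv, Units.val_mul, val_det_apply, hyuv]⟩

theorem relImage_eq_of_mapsTo [Finite F] (f : Equiv.Perm (Om F K)) {t : Set (Om F K × Om F K)}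
    (h : Set.MapsTo (Prod.map f f) t t) : relImage F K f t = t :=
  ((t.toFinite.injOn_iff_bijOn_of_mapsTo h).mp (f.injective.prodMap f.injective).injOn).image_eq

theorem relImage_linPerm_rrel [Finite F] (T : GL (Fin 2) F) (c : CC F K) :
    relImage F K (linPerm T) (rrel F K c) = rrel F K c :=
  relImage_eq_of_mapsTo _ (mapsTo_linPerm_rrel T c)

theorem relImage_linPerm_srel [Finite F] {T : GL (Fin 2) F} (hT : det T ∈ K) (c : CC F K) :
    relImage F K (linPerm T) (srel F K c) = srel F K c :=
  relImage_eq_of_mapsTo _ <| by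
    simpa [(QuotientGroup.eq_one_iff _).mpr hT] using mapsTo_linPerm_srel T c

theorem exists_linPerm_of_mem_rrel {g : CC F K} {α₁ α₂ β₁ β₂ : Om F K}
    (h₁ : (α₁, α₂) ∈ rrel F K g) (h₂ : (β₁, β₂) ∈ rrel F K g) :
    ∃ T : GL (Fin 2) F, det T ∈ K ∧ linPerm T α₁ = β₁ ∧ linPerm T α₂ = β₂ := by
  obtain ⟨u, a, y, rfl, rfl, rfl, hya⟩ := h₁
  obtain ⟨v, b, y', rfl, rfl, hy', hy'b⟩ := h₂
  obtain ⟨T, hdet, hTu⟩ := exists_GL_det_eq_one_mulVec_eq u.2 v.2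
  refine ⟨T, hdet ▸ K.one_mem, implements_linPerm T u v hTu, ?_⟩
  refine (linPerm_mk T a).trans (Quotient.sound ⟨y' / y, QuotientGroup.eq_iff_div_mem.mp hy', ?_⟩)
  rw [coe_mulVecEquiv, ← hya, mulVec_smul, hTu, ← hy'b, smul_smul, ← Units.val_mul,
    div_mul_cancel]

theorem exists_linPerm_of_mem_srel {g : CC F K} {α₁ α₂ β₁ β₂ : Om F K}
    (h₁ : (α₁, α₂) ∈ srel F K g) (h₂ : (β₁, β₂) ∈ srel F K g) :
    ∃ T : GL (Fin 2) F, det T ∈ K ∧ linPerm T α₁ = β₁ ∧ linPerm T α₂ = β₂ := by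
  obtain ⟨u, a, y, rfl, rfl, rfl, hya⟩ := h₁
  obtain ⟨v, b, y', rfl, rfl, hy', hy'b⟩ := h₂
  obtain ⟨T, hdet, hTu, hTa⟩ := exists_GL_mulVec_eq_pair
    (dt_eq_det u a ▸ hya ▸ y.ne_zero) (dt_eq_det v b ▸ hy'b ▸ y'.ne_zero)
  have hT : det T = y' / y := Units.ext <| by
    rw [val_det_apply, Units.val_div_eq_div_val, eq_div_iff y.ne_zero, hya, hy'b, dt_eq_det,
      dt_eq_det, hdet]
  exact ⟨T, hT ▸ QuotientGroup.eq_iff_div_mem.mp hy', implements_linPerm T u v hTu,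
    implements_linPerm T a b hTa⟩

end Tatra

open Tatra in
theorem stmt_11_general (F : Type) [Field F] [Fintype F] (K : Subgroup Fˣ) (g : CC F K) :
    (∀ α₁ α₂ β₁ β₂ : Om F K, (α₁, α₂) ∈ rrel F K g → (β₁, β₂) ∈ rrel F K g →
      ∃ (T : Matrix (Fin 2) (Fin 2) F) (f : Equiv.Perm (Om F K)),
        (∃ y : Fˣ, y ∈ K ∧ (y : F) = T.det) ∧
        Implements F K T (RingEquiv.refl F) f ∧ f α₁ = β₁ ∧ f α₂ = β₂) ∧
    (∀ α₁ α₂ β₁ β₂ : Om F K, (α₁, α₂) ∈ srel F K g → (β₁, β₂) ∈ srel F K g →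
      ∃ (T : Matrix (Fin 2) (Fin 2) F) (f : Equiv.Perm (Om F K)),
        (∃ y : Fˣ, y ∈ K ∧ (y : F) = T.det) ∧
        Implements F K T (RingEquiv.refl F) f ∧ f α₁ = β₁ ∧ f α₂ = β₂) ∧
    (∀ α₁ α₂ β₁ β₂ : Om F K, (α₁, α₂) ∈ rrel F K g → (β₁, β₂) ∈ rrel F K g →
      ∃ f : Equiv.Perm (Om F K),
        (∀ c : CC F K, relImage F K f (rrel F K c) = rrel F K c) ∧
        (∀ c : CC F K, relImage F K f (srel F K c) = srel F K c) ∧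
        f α₁ = β₁ ∧ f α₂ = β₂) ∧
    (∀ α₁ α₂ β₁ β₂ : Om F K, (α₁, α₂) ∈ srel F K g → (β₁, β₂) ∈ srel F K g →
      ∃ f : Equiv.Perm (Om F K),
        (∀ c : CC F K, relImage F K f (rrel F K c) = rrel F K c) ∧
        (∀ c : CC F K, relImage F K f (srel F K c) = srel F K c) ∧
        f α₁ = β₁ ∧ f α₂ = β₂) := by
  refine ⟨fun _ _ _ _ h₁ h₂ => ?_, fun _ _ _ _ h₁ h₂ => ?_, fun _ _ _ _ h₁ h₂ => ?_,
    fun _ _ _ _ h₁ h₂ => ?_⟩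
  · obtain ⟨T, hT, e₁, e₂⟩ := exists_linPerm_of_mem_rrel h₁ h₂
    exact ⟨T, linPerm T, ⟨_, hT, rfl⟩, implements_linPerm T, e₁, e₂⟩
  · obtain ⟨T, hT, e₁, e₂⟩ := exists_linPerm_of_mem_srel h₁ h₂
    exact ⟨T, linPerm T, ⟨_, hT, rfl⟩, implements_linPerm T, e₁, e₂⟩
  · obtain ⟨T, hT, e₁, e₂⟩ := exists_linPerm_of_mem_rrel h₁ h₂
    exact ⟨linPerm T, relImage_linPerm_rrel T, relImage_linPerm_srel hT, e₁, e₂⟩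
  · obtain ⟨T, hT, e₁, e₂⟩ := exists_linPerm_of_mem_srel h₁ h₂
    exact ⟨linPerm T, relImage_linPerm_rrel T, relImage_linPerm_srel hT, e₁, e₂⟩

open Tatra in
/-- for each `g ∈ C`, the group of permutations `f_{T,id}` with
`det T ∈ K` is transitive on `r_g` and on `s_g`; consequently each basic relation is a
single orbit of the automorphism group of the Tatra scheme, i.e. the scheme is schurian. -/
theorem stmt_11 (F : Type) [Field F] [Fintype F] (K : Subgroup Fˣ) (q n : ℕ)
    (hq : Fintype.card F = q) (hn : K.index = n) (hnd : n ∣ q - 1)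
    (heven : Even (q * ((q - 1) / n))) (g : CC F K) :
    (∀ α₁ α₂ β₁ β₂ : Om F K, (α₁, α₂) ∈ rrel F K g → (β₁, β₂) ∈ rrel F K g →
      ∃ (T : Matrix (Fin 2) (Fin 2) F) (f : Equiv.Perm (Om F K)),
        (∃ y : Fˣ, y ∈ K ∧ (y : F) = T.det) ∧
        Implements F K T (RingEquiv.refl F) f ∧ f α₁ = β₁ ∧ f α₂ = β₂) ∧
    (∀ α₁ α₂ β₁ β₂ : Om F K, (α₁, α₂) ∈ srel F K g → (β₁, β₂) ∈ srel F K g →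
      ∃ (T : Matrix (Fin 2) (Fin 2) F) (f : Equiv.Perm (Om F K)),
        (∃ y : Fˣ, y ∈ K ∧ (y : F) = T.det) ∧
        Implements F K T (RingEquiv.refl F) f ∧ f α₁ = β₁ ∧ f α₂ = β₂) ∧
    (∀ α₁ α₂ β₁ β₂ : Om F K, (α₁, α₂) ∈ rrel F K g → (β₁, β₂) ∈ rrel F K g →
      ∃ f : Equiv.Perm (Om F K),
        (∀ c : CC F K, relImage F K f (rrel F K c) = rrel F K c) ∧
        (∀ c : CC F K, relImage F K f (srel F K c) = srel F K c) ∧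
        f α₁ = β₁ ∧ f α₂ = β₂) ∧
    (∀ α₁ α₂ β₁ β₂ : Om F K, (α₁, α₂) ∈ srel F K g → (β₁, β₂) ∈ srel F K g →
      ∃ f : Equiv.Perm (Om F K),
        (∀ c : CC F K, relImage F K f (rrel F K c) = rrel F K c) ∧
        (∀ c : CC F K, relImage F K f (srel F K c) = srel F K c) ∧
        f α₁ = β₁ ∧ f α₂ = β₂) :=
  stmt_11_general F K g
end

section
/- Let r and p be primes and let d be a positive even integer. Then 4(r^d − 1) ≠ p(p − 3). Equivalently, if q = r^d is a power of a prime r and q − 1 = p(p−3)/4 for a prime p, then d is odd. -/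
/-!
Completing the square turns `4(n² − 1) = p(p − 3)` into `(4n)² − (2p − 3)² = 7`, and for `n ≥ 2`
two squares below `(4n)²` differ from it by at least `8n − 1 ≥ 15`. With `d = 2e`, `r^d` is the
square of `n = r^e ≥ 2`.
-/

lemma sq_sub_sq_ne_seven {x y : ℤ} (hx : 2 ≤ x) (hy : 0 ≤ y) : (4 * x) ^ 2 - y ^ 2 ≠ 7 := by
  intro h
  have hlt : y < 4 * x := by nlinarith
  have hle : y ≤ 4 * x - 1 := by omega
  nlinarith

lemma four_mul_sq_sub_one_ne_mul_sub_three {n : ℕ} (hn : 2 ≤ n) (p : ℕ) :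
    4 * (n ^ 2 - 1) ≠ p * (p - 3) := by
  intro h
  have hn2 : 4 ≤ n ^ 2 := by nlinarith
  rcases lt_or_ge p 3 with hp | hp
  · interval_cases p <;> omega
  have hz : (4 : ℤ) * ((n : ℤ) ^ 2 - 1) = p * ((p : ℤ) - 3) := by
    have := congrArg (Nat.cast : ℕ → ℤ) h
    push_cast [Nat.cast_sub (by omega : 1 ≤ n ^ 2), Nat.cast_sub hp] at this
    exact this
  exact sq_sub_sq_ne_seven (x := n) (y := 2 * p - 3) (by exact_mod_cast hn) (by omega)
    (by linear_combination 4 * hz)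

theorem stmt_18_general (r p d : ℕ) (hr : r.Prime) (hd : 0 < d)
    (hde : Even d) : 4 * (r ^ d - 1) ≠ p * (p - 3) := by
  obtain ⟨e, rfl⟩ := hde
  have hre : 2 ≤ r ^ e := Nat.one_lt_pow (by omega) hr.one_lt
  rw [← two_mul, pow_mul']
  exact four_mul_sq_sub_one_ne_mul_sub_three hre p

/-- for primes `r`, `p` and a positive even integer `d`,
`4(r^d − 1) ≠ p(p − 3)`; equivalently, if `q = r^d` is a prime power with
`q − 1 = p(p−3)/4` for a prime `p`, then `d` is odd. -/
theorem stmt_18 (r p d : ℕ) (hr : r.Prime) (hp : p.Prime) (hd : 0 < d)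
    (hde : Even d) : 4 * (r ^ d - 1) ≠ p * (p - 3) :=
  stmt_18_general r p d hr hd hde
end
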